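/- arXiv:2007.04343 — 2 statements merged into one kernel-verified Lean document; each statement's English description precedes it below -/
import Mathlib

section
/- The set of mean-zero vectors y ∈ ℝ^N (N ≥ 2) with ‖y‖_1 ≤ 2 equals the convex hull of the N(N−1) vectors e_i − e_j (i ≠ j), where e_i are the standard basis vectors. -/
/-!
Write `y = y⁺ - y⁻` and let `s = ∑ y⁺ = ∑ y⁻`, so that `‖y‖₁ = 2 s` and `s ≤ 1`. Expanding
`∑_{i,j} y⁺_i y⁻_j (e_i - e_j) = s y` exhibits `y / s` as a convex combination of the `e_i - e_j`
with weights `y⁺_i y⁻_j / s²` (the diagonal terms are `0`, the midpoint of `e_i - e_j` and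
`e_j - e_i`), and `y` lies on the segment from `0` to `y / s`. Conversely, the constraints `∑ y = 0` and `‖y‖₁ ≤ 2` cut
out a convex set containing every `e_i - e_j`.
-/

open Finset

variable {𝕜 ι : Type*}

variable (𝕜 ι) in
def singleSubSingle [Ring 𝕜] [DecidableEq ι] : Set (ι → 𝕜) :=
  {w | ∃ i j, i ≠ j ∧ w = Pi.single i 1 - Pi.single j 1}

lemma single_sub_single_eq_ite [Ring 𝕜] [DecidableEq ι] {i j : ι} (hij : i ≠ j) :
    (Pi.single i 1 - Pi.single j 1 : ι → 𝕜) =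
      fun l => if l = i then 1 else if l = j then -1 else 0 := by
  ext l
  by_cases hi : l = i <;> by_cases hj : l = j <;> simp_all

lemma abs_single_sub_single_apply [Ring 𝕜] [LinearOrder 𝕜] [IsOrderedRing 𝕜] [DecidableEq ι]
    {i j : ι} (hij : i ≠ j) (l : ι) :
    |(Pi.single i 1 - Pi.single j 1 : ι → 𝕜) l| =
      (Pi.single i 1 : ι → 𝕜) l + (Pi.single j 1 : ι → 𝕜) l := by
  by_cases hi : l = i <;> by_cases hj : l = j <;> simp_all

lemma sum_abs_single_sub_single [Ring 𝕜] [LinearOrder 𝕜] [IsOrderedRing 𝕜] [Fintype ι]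
    [DecidableEq ι] {i j : ι} (hij : i ≠ j) :
    ∑ l, |(Pi.single i 1 - Pi.single j 1 : ι → 𝕜) l| = 2 := by
  rw [Fintype.sum_congr _ _ (abs_single_sub_single_apply hij)]
  simp [sum_add_distrib, one_add_one_eq_two]

lemma sum_mul_smul_single_sub_single [CommRing 𝕜] [Fintype ι] [DecidableEq ι] (p q : ι → 𝕜) :
    ∑ x : ι × ι, (p x.1 * q x.2) • (Pi.single x.1 1 - Pi.single x.2 1 : ι → 𝕜) =
      (∑ j, q j) • p - (∑ i, p i) • q := by
  ext l
  simp [Fintype.sum_prod_type, mul_sub, sum_sub_distrib, Pi.single_apply, ← sum_mul, ← mul_sum]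
  ring

section LinearOrderedField

variable [Field 𝕜] [LinearOrder 𝕜] [IsStrictOrderedRing 𝕜]

lemma convex_sum_eq_zero [Fintype ι] : Convex 𝕜 {y : ι → 𝕜 | ∑ i, y i = 0} :=
  convex_hyperplane ⟨fun x y => by simp [sum_add_distrib], fun c x => by simp [mul_sum]⟩ 0

lemma convex_sum_abs_le [Fintype ι] (r : 𝕜) : Convex 𝕜 {y : ι → 𝕜 | ∑ i, |y i| ≤ r} := by
  intro x hx z hz a b ha hb hab
  calc ∑ i, |(a • x + b • z) i| ≤ ∑ i, (a * |x i| + b * |z i|) := by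
        refine sum_le_sum fun i _ => (abs_add_le _ _).trans_eq ?_
        simp [abs_mul, abs_of_nonneg ha, abs_of_nonneg hb]
    _ = a * ∑ i, |x i| + b * ∑ i, |z i| := by simp only [sum_add_distrib, mul_sum]
    _ ≤ a * r + b * r := by gcongr <;> assumption
    _ = r := by rw [← add_mul, hab, one_mul]

variable [DecidableEq ι] [Nontrivial ι]

lemma zero_mem_convexHull_singleSubSingle :
    (0 : ι → 𝕜) ∈ convexHull 𝕜 (singleSubSingle 𝕜 ι) := by
  obtain ⟨i, j, hij⟩ := exists_pair_ne ι
  have hmid : (0 : ι → 𝕜) = (2⁻¹ : 𝕜) • (Pi.single i 1 - Pi.single j 1) +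
      (2⁻¹ : 𝕜) • (Pi.single j 1 - Pi.single i 1) := by
    rw [← smul_add]; simp
  rw [hmid]
  exact convex_convexHull 𝕜 (singleSubSingle 𝕜 ι) (subset_convexHull 𝕜 _ ⟨i, j, hij, rfl⟩)
    (subset_convexHull 𝕜 _ ⟨j, i, hij.symm, rfl⟩) (by positivity) (by positivity) (by norm_num)

lemma single_sub_single_mem_convexHull (i j : ι) :
    (Pi.single i 1 - Pi.single j 1 : ι → 𝕜) ∈ convexHull 𝕜 (singleSubSingle 𝕜 ι) := by
  rcases eq_or_ne i j with rfl | hij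
  · simpa using zero_mem_convexHull_singleSubSingle
  · exact subset_convexHull 𝕜 _ ⟨i, j, hij, rfl⟩

lemma mem_convexHull_singleSubSingle [Fintype ι] {y : ι → 𝕜} (hsum : ∑ i, y i = 0)
    (habs : ∑ i, |y i| ≤ 2) : y ∈ convexHull 𝕜 (singleSubSingle 𝕜 ι) := by
  set s := ∑ i, (y i)⁺
  have hs_neg : ∑ i, (y i)⁻ = s := by
    rw [eq_comm, ← sub_eq_zero, ← sum_sub_distrib]
    simpa only [posPart_sub_negPart] using hsum
  have hs_abs : ∑ i, |y i| = 2 * s := by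
    simp only [← posPart_add_negPart, sum_add_distrib, hs_neg, s]
    ring
  have hs_nonneg : 0 ≤ s := sum_nonneg fun i _ => posPart_nonneg _
  rcases hs_nonneg.eq_or_lt with hs0 | hs_pos
  · have hy : y = 0 := by
      ext i
      rw [← hs0, mul_zero, sum_eq_zero_iff_of_nonneg fun i _ => abs_nonneg _] at hs_abs
      simpa using hs_abs i (mem_univ i)
    exact hy ▸ zero_mem_convexHull_singleSubSingle
  have hw_sum : ∑ x : ι × ι, (y x.1)⁺ * (y x.2)⁻ = s * s := by
    simp only [Fintype.sum_prod_type, ← mul_sum, ← sum_mul, hs_neg, s]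
  have hdecomp :
      ∑ x : ι × ι, ((y x.1)⁺ * (y x.2)⁻) • (Pi.single x.1 1 - Pi.single x.2 1 : ι → 𝕜) =
        s • y := by
    refine (sum_mul_smul_single_sub_single (fun i => (y i)⁺) (fun i => (y i)⁻)).trans ?_
    rw [hs_neg, ← smul_sub]
    exact congrArg (s • ·) (funext fun i => posPart_sub_negPart (y i))
  have hc : (univ : Finset (ι × ι)).centerMass (fun x => (y x.1)⁺ * (y x.2)⁻)
      (fun x => (Pi.single x.1 1 - Pi.single x.2 1 : ι → 𝕜)) ∈
        convexHull 𝕜 (singleSubSingle 𝕜 ι) :=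
    (convex_convexHull 𝕜 _).centerMass_mem
      (fun x _ => mul_nonneg (posPart_nonneg _) (negPart_nonneg _))
      (by rw [hw_sum]; positivity) fun x _ => single_sub_single_mem_convexHull x.1 x.2
  rw [Finset.centerMass, hw_sum, hdecomp, smul_smul,
    show (s * s)⁻¹ * s = s⁻¹ by field_simp] at hc
  simpa [smul_inv_smul₀ hs_pos.ne'] using
    (convex_convexHull 𝕜 _).smul_mem_of_zero_mem zero_mem_convexHull_singleSubSingle hc
      ⟨hs_nonneg, by linarith⟩

theorem convexHull_singleSubSingle [Fintype ι] :
    convexHull 𝕜 (singleSubSingle 𝕜 ι) = {y | ∑ i, y i = 0 ∧ ∑ i, |y i| ≤ 2} := by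
  refine subset_antisymm ?_ fun y ⟨hsum, habs⟩ => mem_convexHull_singleSubSingle hsum habs
  refine convexHull_min ?_ (convex_sum_eq_zero.inter (convex_sum_abs_le 2))
  rintro _ ⟨i, j, hij, rfl⟩
  exact ⟨by simp [sum_sub_distrib], (sum_abs_single_sub_single hij).le⟩

end LinearOrderedField

/-- The set of mean-zero vectors `y ∈ ℝ^N` (`N ≥ 2`) with `‖y‖₁ ≤ 2` is the convex hull
of the `N(N-1)` vectors `e_i - e_j` (`i ≠ j`). -/
theorem stmt9 (N : ℕ) (hN : 2 ≤ N) :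
    {y : Fin N → ℝ | ∑ i, y i = 0 ∧ ∑ i, |y i| ≤ 2} =
      convexHull ℝ {w : Fin N → ℝ |
        ∃ i j : Fin N, i ≠ j ∧
          w = fun l => if l = i then (1 : ℝ) else if l = j then -1 else 0} := by
  have : Nontrivial (Fin N) := Fin.nontrivial_iff_two_le.mpr hN
  have hgen : {w : Fin N → ℝ | ∃ i j : Fin N, i ≠ j ∧
      w = fun l => if l = i then (1 : ℝ) else if l = j then -1 else 0} =
        singleSubSingle ℝ (Fin N) := by
    ext w
    exact exists₂_congr fun i j => and_congr_right fun hij => by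
      rw [single_sub_single_eq_ite hij]
  rw [hgen, convexHull_singleSubSingle]
end

section
/- The convex hull of all coordinate permutations of the vectors v_k ∈ ℝ^N (with k entries equal to N−k and N−k entries equal to −k, for 1 ≤ k ≤ N−1) equals the set of mean-zero vectors y with max_i y_i − min_i y_i ≤ N. -/
/-!
Every generator `v_k ∘ σ` is mean-zero with spread `N`, and both conditions are convex, so the
hull consists of such vectors. Conversely, sort a mean-zero `y` into decreasing order `z`; the
telescoping identity `z = ∑ₖ ((z_{k-1} - z_k) / N) • v_k` writes `z` as a nonnegative combination
of the `v_k` with total weight `(max z - min z) / N ≤ 1`, and the missing weight is put on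
`0 = (v_1 + v_{N-1} ∘ rev) / 2`.
-/

open Finset

theorem Finset.sup'_sub_inf'_le_iff {ι α : Type*} [AddCommGroup α] [LinearOrder α]
    [IsOrderedAddMonoid α] {s : Finset ι} (hs : s.Nonempty) (f : ι → α) (C : α) :
    s.sup' hs f - s.inf' hs f ≤ C ↔ ∀ p ∈ s, ∀ q ∈ s, f p - f q ≤ C := by
  rw [sub_le_comm, le_inf'_iff, forall₂_comm]
  simp only [sub_le_iff_le_add, sup'_le_iff, add_comm C]

theorem Convex.sum_smul_mem_of_sum_le_one {E ι : Type*} [AddCommGroup E] [Module ℝ E]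
    {K : Set E} (hK : Convex ℝ K) (h0 : (0 : E) ∈ K) {s : Finset ι} {c : ι → ℝ} {x : ι → E}
    (hc : ∀ i ∈ s, 0 ≤ c i) (hc1 : ∑ i ∈ s, c i ≤ 1) (hx : ∀ i ∈ s, x i ∈ K) :
    ∑ i ∈ s, c i • x i ∈ K := by
  rcases (sum_nonneg hc).eq_or_lt with ht | ht
  · have hc0 := (sum_eq_zero_iff_of_nonneg hc).mp ht.symm
    rwa [sum_eq_zero fun i hi => by rw [hc0 i hi, zero_smul]]
  · have := hK.smul_mem_of_zero_mem h0 (hK.centerMass_mem hc ht hx) ⟨ht.le, hc1⟩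
    rwa [centerMass, smul_smul, mul_inv_cancel₀ ht.ne', one_smul] at this

theorem LinearMap.mapsTo_convexHull {𝕜 E : Type*} [Field 𝕜] [LinearOrder 𝕜]
    [IsStrictOrderedRing 𝕜] [AddCommGroup E] [Module 𝕜 E] (f : E →ₗ[𝕜] E) {s : Set E}
    (hf : Set.MapsTo f s s) : Set.MapsTo f (convexHull 𝕜 s) (convexHull 𝕜 s) := fun _ hy =>
  convexHull_mono hf.image_subset (f.image_convexHull s ▸ Set.mem_image_of_mem f hy)

theorem Fin.sum_univ_castSucc_sub_succ {M : Type*} [AddCommGroup M] :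
    ∀ {n : ℕ} (f : Fin (n + 1) → M), ∑ i : Fin n, (f i.castSucc - f i.succ) = f 0 - f (last n)
  | 0, f => by simp
  | n + 1, f => by
    rw [sum_univ_castSucc]
    simp only [succ_castSucc]
    rw [sum_univ_castSucc_sub_succ fun i => f i.castSucc, castSucc_zero, succ_last]
    abel

theorem sum_range_succ_mul_sub (g : ℕ → ℝ) (n : ℕ) :
    ∑ j ∈ range n, ((j : ℝ) + 1) * (g j - g (j + 1)) = ∑ j ∈ range n, g j - n * g n := by
  induction n with
  | zero => simp
  | succ n ih => rw [sum_range_succ, ih, sum_range_succ]; push_cast; ring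

theorem sum_range_ite_le_sub (g : ℕ → ℝ) {m n : ℕ} (h : m ≤ n) :
    ∑ j ∈ range n, (if m ≤ j then g j - g (j + 1) else 0) = g m - g n := by
  induction n, h using Nat.le_induction with
  | base =>
    rw [sub_self]
    exact sum_eq_zero fun j hj => if_neg (not_le.mpr (mem_range.mp hj))
  | succ n hmn ih => rw [sum_range_succ, ih, if_pos hmn]; ring

theorem sum_range_sub_mul_step_eq (g : ℕ → ℝ) {m n : ℕ} (hm : m ≤ n)
    (hg : ∑ j ∈ range (n + 1), g j = 0) :
    ∑ j ∈ range n, (g j - g (j + 1)) *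
      (if m < j + 1 then ((n + 1 : ℕ) : ℝ) - ((j + 1 : ℕ) : ℝ) else -((j + 1 : ℕ) : ℝ)) =
      (n + 1) * g m := by
  have hstep : ∀ j : ℕ, (g j - g (j + 1)) *
      (if m < j + 1 then ((n + 1 : ℕ) : ℝ) - ((j + 1 : ℕ) : ℝ) else -((j + 1 : ℕ) : ℝ)) =
      (n + 1) * (if m ≤ j then g j - g (j + 1) else 0) - ((j : ℝ) + 1) * (g j - g (j + 1)) := by
    intro j
    push_cast
    split_ifs <;> first | omega | ring
  rw [sum_range_succ] at hg
  rw [sum_congr rfl fun j _ => hstep j, sum_sub_distrib, ← mul_sum, sum_range_ite_le_sub g hm,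
    sum_range_succ_mul_sub, eq_neg_of_add_eq_zero_left hg]
  ring

/-- The paper's `v_k`. -/
noncomputable def stepVector (N k : ℕ) : Fin N → ℝ :=
  fun i => if (i : ℕ) < k then (N : ℝ) - k else -(k : ℝ)

def stepVectorPerms (N : ℕ) : Set (Fin N → ℝ) :=
  {w | ∃ k, 1 ≤ k ∧ k ≤ N - 1 ∧ ∃ σ : Equiv.Perm (Fin N), w = stepVector N k ∘ σ}

def zeroSumSpreadLE (ι : Type*) [Fintype ι] (C : ℝ) : Set (ι → ℝ) :=
  {y | ∑ i, y i = 0 ∧ ∀ p q, y p - y q ≤ C}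

theorem convex_zeroSumSpreadLE (ι : Type*) [Fintype ι] (C : ℝ) :
    Convex ℝ (zeroSumSpreadLE ι C) := by
  rintro u ⟨hu, hu'⟩ v ⟨hv, hv'⟩ a b ha hb hab
  refine ⟨by simp [sum_add_distrib, ← mul_sum, hu, hv], fun p q => ?_⟩
  calc (a • u + b • v) p - (a • u + b • v) q = a * (u p - u q) + b * (v p - v q) := by
        simp only [Pi.add_apply, Pi.smul_apply, smul_eq_mul]; ring
    _ ≤ a * C + b * C := by gcongr <;> simp only [hu', hv']
    _ = C := by rw [← add_mul, hab, one_mul]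

theorem sum_stepVector {N k : ℕ} (hk : k ≤ N) : ∑ i, stepVector N k i = 0 := by
  have : ∀ i : Fin N, stepVector N k i = N * (if (i : ℕ) < k then 1 else 0) - k := by
    intro i; unfold stepVector; split_ifs <;> ring
  simp only [this, sum_sub_distrib, ← mul_sum, sum_boole, Fin.card_filter_val_lt,
    min_eq_right hk, sum_const, card_univ, Fintype.card_fin, nsmul_eq_mul]
  ring

theorem stepVector_sub_le (N k : ℕ) (p q : Fin N) : stepVector N k p - stepVector N k q ≤ N := by
  unfold stepVector
  split_ifs <;> linarith [(N.cast_nonneg : (0 : ℝ) ≤ N)]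

theorem stepVectorPerms_subset_zeroSumSpreadLE (N : ℕ) :
    stepVectorPerms N ⊆ zeroSumSpreadLE (Fin N) N := by
  rintro _ ⟨k, -, hk, σ, rfl⟩
  exact ⟨(Equiv.sum_comp σ _).trans (sum_stepVector (by omega)), fun p q => stepVector_sub_le ..⟩

theorem stepVectorPerms_comp_perm {N : ℕ} {w : Fin N → ℝ} (hw : w ∈ stepVectorPerms N)
    (σ : Equiv.Perm (Fin N)) : w ∘ σ ∈ stepVectorPerms N := by
  obtain ⟨k, hk1, hk, τ, rfl⟩ := hw
  exact ⟨k, hk1, hk, σ.trans τ, rfl⟩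

theorem stepVector_add_stepVector_comp_revPerm (n : ℕ) :
    stepVector (n + 1) 1 + stepVector (n + 1) n ∘ Fin.revPerm = 0 := by
  funext i
  simp only [stepVector, Pi.add_apply, Function.comp_apply, Fin.revPerm_apply, Fin.val_rev,
    Pi.zero_apply]
  have := i.isLt
  push_cast
  split_ifs <;> first | omega | ring

theorem zero_mem_convexHull_stepVectorPerms {n : ℕ} (hn : 1 ≤ n) :
    (0 : Fin (n + 1) → ℝ) ∈ convexHull ℝ (stepVectorPerms (n + 1)) := by
  have h1 : stepVector (n + 1) 1 ∈ stepVectorPerms (n + 1) := ⟨1, le_rfl, by omega, 1, rfl⟩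
  have h2 : stepVector (n + 1) n ∘ Fin.revPerm ∈ stepVectorPerms (n + 1) :=
    ⟨n, hn, by omega, Fin.revPerm, rfl⟩
  have := convex_convexHull ℝ _ (subset_convexHull ℝ _ h1) (subset_convexHull ℝ _ h2)
    (by norm_num : (0 : ℝ) ≤ 1 / 2) (by norm_num : (0 : ℝ) ≤ 1 / 2) (by norm_num)
  rwa [← smul_add, stepVector_add_stepVector_comp_revPerm, smul_zero] at this

theorem sum_smul_stepVector_eq {n : ℕ} (z : Fin (n + 1) → ℝ) (hz : ∑ i, z i = 0) :
    ∑ j : Fin n, ((z j.castSucc - z j.succ) / (n + 1)) • stepVector (n + 1) (j + 1) = z := by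
  funext m
  set g : ℕ → ℝ := fun i => if h : i < n + 1 then z ⟨i, h⟩ else 0
  have hgz : ∀ i : Fin (n + 1), z i = g i := fun i => by simp only [g, dif_pos i.isLt]
  simp only [hgz] at hz
  rw [Fin.sum_univ_eq_sum_range g] at hz
  simp only [Finset.sum_apply, Pi.smul_apply, smul_eq_mul, stepVector, hgz, Fin.val_castSucc,
    Fin.val_succ]
  rw [Fin.sum_univ_eq_sum_range (fun j => (g j - g (j + 1)) / (n + 1) *
    (if (m : ℕ) < j + 1 then ((n + 1 : ℕ) : ℝ) - ((j + 1 : ℕ) : ℝ) else -((j + 1 : ℕ) : ℝ)))]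
  simp only [div_mul_eq_mul_div, ← sum_div,
    sum_range_sub_mul_step_eq g (Nat.lt_succ_iff.mp m.isLt) hz]
  field_simp

theorem antitone_mem_convexHull_stepVectorPerms {n : ℕ} (hn : 1 ≤ n) {z : Fin (n + 1) → ℝ}
    (hz : Antitone z) (hsum : ∑ i, z i = 0) (hspread : z 0 - z (Fin.last n) ≤ n + 1) :
    z ∈ convexHull ℝ (stepVectorPerms (n + 1)) := by
  rw [← sum_smul_stepVector_eq z hsum]
  refine (convex_convexHull ℝ _).sum_smul_mem_of_sum_le_one
    (zero_mem_convexHull_stepVectorPerms hn) (fun j _ => ?_) ?_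
    (fun j _ => subset_convexHull ℝ _ ⟨j + 1, by omega, by omega, 1, rfl⟩)
  · exact div_nonneg (sub_nonneg.mpr (hz (Fin.castSucc_le_succ j))) (by positivity)
  · rw [← sum_div, div_le_one (by positivity), Fin.sum_univ_castSucc_sub_succ]
    exact hspread

theorem convexHull_stepVectorPerms {N : ℕ} (hN : 2 ≤ N) :
    convexHull ℝ (stepVectorPerms N) = zeroSumSpreadLE (Fin N) N := by
  obtain ⟨n, rfl⟩ : ∃ n, N = n + 1 := ⟨N - 1, by omega⟩
  refine (convexHull_min (stepVectorPerms_subset_zeroSumSpreadLE _)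
    (convex_zeroSumSpreadLE _ _)).antisymm fun y ⟨hsum, hspread⟩ => ?_
  set τ : Equiv.Perm (Fin (n + 1)) := Fin.revPerm.trans (Tuple.sort y)
  have hz : y ∘ τ ∈ convexHull ℝ (stepVectorPerms (n + 1)) :=
    antitone_mem_convexHull_stepVectorPerms (by omega)
      ((Tuple.monotone_sort y).comp_antitone Fin.rev_anti) ((Equiv.sum_comp τ y).trans hsum)
      (by simpa using hspread (τ 0) (τ (Fin.last n)))
  rw [← show (y ∘ τ) ∘ τ.symm = y by simp [Function.comp_assoc]]
  exact (LinearMap.funLeft ℝ ℝ τ.symm).mapsTo_convexHull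
    (fun w hw => stepVectorPerms_comp_perm hw τ.symm) hz

/-- The convex hull of all coordinate permutations of the vectors `v_k ∈ ℝ^N`
(with `k` entries equal to `N - k` and `N - k` entries equal to `-k`, `1 ≤ k ≤ N-1`)
is exactly the set of mean-zero vectors with spread `max_i y_i - min_i y_i ≤ N`. -/
theorem stmt10 (N : ℕ) (hN : 2 ≤ N) :
    convexHull ℝ {w : Fin N → ℝ |
        ∃ k : ℕ, 1 ≤ k ∧ k ≤ N - 1 ∧ ∃ σ : Equiv.Perm (Fin N),
          w = (fun i : Fin N => if (i : ℕ) < k then ((N : ℝ) - k) else -(k : ℝ)) ∘ σ} =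
      {y : Fin N → ℝ | ∑ i, y i = 0 ∧
        (Finset.univ.sup' (Finset.univ_nonempty_iff.mpr ⟨⟨0, by omega⟩⟩) y) -
          (Finset.univ.inf' (Finset.univ_nonempty_iff.mpr ⟨⟨0, by omega⟩⟩) y) ≤ N} := by
  refine (convexHull_stepVectorPerms hN).trans ?_
  ext y
  simp only [zeroSumSpreadLE, Set.mem_ofPred_eq, sup'_sub_inf'_le_iff, mem_univ, forall_const]
end
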